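/- Let X ∈ ℝ^{d×n} have columns X_1,…,X_n, let Ω be a set of pairs with N = |Ω|, let k ∈ {1,…,d}, and suppose there is Δ ∈ (0,1) such that ‖Xᵀ B X‖²_{F,Ω} ≤ N(1+Δ)‖B‖²_F for all symmetric B with ‖B‖_{0,0} ≤ 2k. Then for all symmetric matrices Θ_u, Θ_v with ‖Θ_u‖_{0,0} ≤ k and ‖Θ_v‖_{0,0} ≤ k, the Kullback–Leibler divergence between the corresponding product Bernoulli measures satisfies KL(P_{Θ_u}, P_{Θ_v}) ≤ (1/8)·‖Xᵀ(Θ_u − Θ_v)X‖²_{F,Ω} ≤ (N(1+Δ)/8)·‖Θ_u − Θ_v‖²_F. -/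

import Mathlib

open Matrix MeasureTheory

noncomputable section

/-- The logistic (sigmoid) function `σ(x) = 1/(1+e^{-x})`. -/
def sigmoid (x : ℝ) : ℝ := 1 / (1 + Real.exp (-x))

/-- Kullback–Leibler divergence between Bernoulli distributions of parameters `p` and `q`. -/
def bernKL (p q : ℝ) : ℝ :=
  p * Real.log (p / q) + (1 - p) * Real.log ((1 - p) / (1 - q))

/-- The affinity `X_iᵀ Θ X_j` where `X_i` are the columns of `X`. -/
def aff {d n : ℕ} (X : Matrix (Fin d) (Fin n) ℝ) (Θ : Matrix (Fin d) (Fin d) ℝ)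
    (p : Fin n × Fin n) : ℝ :=
  (Xᵀ * Θ * X) p.1 p.2

/-- Squared Frobenius norm `‖B‖_F²`. -/
def frobSq {d : ℕ} (B : Matrix (Fin d) (Fin d) ℝ) : ℝ := ∑ i, ∑ j, (B i j) ^ 2

/-- Squared semi-norm `‖Xᵀ B X‖²_{F,Ω} = Σ_{(i,j)∈Ω} (Xᵀ B X)_{ij}²`. -/
def frobSqOmega {d n : ℕ} (X : Matrix (Fin d) (Fin n) ℝ) (Ω : Finset (Fin n × Fin n))
    (B : Matrix (Fin d) (Fin d) ℝ) : ℝ :=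
  ∑ p ∈ Ω, (aff X B p) ^ 2

/-- Entrywise ℓ₁ norm `‖Θ‖_{1,1}`. -/
def norm11 {d : ℕ} (Θ : Matrix (Fin d) (Fin d) ℝ) : ℝ := ∑ i, ∑ j, |Θ i j|

open Classical in
/-- `‖Θ‖_{0,0}`: the number of nonzero rows of `Θ`. -/
def norm00 {d : ℕ} (Θ : Matrix (Fin d) (Fin d) ℝ) : ℕ :=
  (Finset.univ.filter (fun i => Θ i ≠ 0)).card

/-- The parameter class `𝒫_{k,r}(M)`; `𝒫(M) = ParamSet d d d M`. -/
def ParamSet (d k r : ℕ) (M : ℝ) : Set (Matrix (Fin d) (Fin d) ℝ) :=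
  {Θ | Θ.IsSymm ∧ norm11 Θ < M ∧ norm00 Θ ≤ k ∧ Θ.rank ≤ r}

/-- `𝓛(M) = σ(M)(1-σ(M))`. -/
def Lconst (M : ℝ) : ℝ := sigmoid M * (1 - sigmoid M)

/-- Probability of observing the outcome `y : Ω → Bool` under the product Bernoulli
measure `P_Θ` in which `Y_{(i,j)} ~ Bernoulli(σ(X_iᵀ Θ X_j))` independently. -/
def weightB {d n : ℕ} (X : Matrix (Fin d) (Fin n) ℝ) (Ω : Finset (Fin n × Fin n))
    (Θ : Matrix (Fin d) (Fin d) ℝ) (y : ↥Ω → Bool) : ℝ :=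
  ∏ p : ↥Ω, (if y p then sigmoid (aff X Θ p.1) else 1 - sigmoid (aff X Θ p.1))

/-- Expectation `E_{Y ~ P_Θ}[f(Y)]` for the product Bernoulli measure on `{0,1}^Ω`. -/
def expectation {d n : ℕ} (X : Matrix (Fin d) (Fin n) ℝ) (Ω : Finset (Fin n × Fin n))
    (Θ : Matrix (Fin d) (Fin d) ℝ) (f : (↥Ω → Bool) → ℝ) : ℝ :=
  ∑ y : ↥Ω → Bool, weightB X Ω Θ y * f y

/-- The log-likelihood `ℓ_y(Θ)`. -/
def loglik {d n : ℕ} (X : Matrix (Fin d) (Fin n) ℝ) (Ω : Finset (Fin n × Fin n))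
    (y : ↥Ω → Bool) (Θ : Matrix (Fin d) (Fin d) ℝ) : ℝ :=
  ∑ p : ↥Ω,
    (if y p then Real.log (sigmoid (aff X Θ p.1)) else Real.log (1 - sigmoid (aff X Θ p.1)))

/-- Kullback–Leibler divergence `KL(P_Θ, P_{Θ'})` between the product Bernoulli measures. -/
def KLdiv {d n : ℕ} (X : Matrix (Fin d) (Fin n) ℝ) (Ω : Finset (Fin n × Fin n))
    (Θ Θ' : Matrix (Fin d) (Fin d) ℝ) : ℝ :=
  ∑ p ∈ Ω, bernKL (sigmoid (aff X Θ p)) (sigmoid (aff X Θ' p))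

/-- The penalty `p(Θ) = c·K·R + c·K·log(de/K)` with `K = max(‖Θ‖_{0,0},1)`, `R = rank(Θ)`. -/
def penalty (c : ℝ) (d : ℕ) (Θ : Matrix (Fin d) (Fin d) ℝ) : ℝ :=
  c * ((max (norm00 Θ) 1 : ℕ) : ℝ) * (Θ.rank : ℝ) +
    c * ((max (norm00 Θ) 1 : ℕ) : ℝ) *
      Real.log ((d : ℝ) * Real.exp 1 / ((max (norm00 Θ) 1 : ℕ) : ℝ))

lemma sigmoid_pos (x : ℝ) : 0 < sigmoid x := by
  unfold sigmoid; positivity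

lemma sigmoid_lt_one (x : ℝ) : sigmoid x < 1 := by
  unfold sigmoid
  rw [div_lt_one (by positivity)]
  linarith [Real.exp_pos (-x)]

lemma sigmoid_hasDerivAt (x : ℝ) :
    HasDerivAt sigmoid (sigmoid x * (1 - sigmoid x)) x := by
  have h1 : HasDerivAt (fun t : ℝ => 1 + Real.exp (-t)) (-Real.exp (-x)) x := by
    have h := (Real.hasDerivAt_exp (-x)).comp x (hasDerivAt_neg x)
    simpa using h.const_add 1
  have h2 : (1 + Real.exp (-x)) ≠ 0 := by positivity
  have h3 := h1.inv h2
  have he : sigmoid = fun t : ℝ => (1 + Real.exp (-t))⁻¹ := by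
    funext t; simp [sigmoid, one_div]
  rw [he]
  refine h3.congr_deriv ?_
  have e := Real.exp_pos (-x)
  rw [show (fun t : ℝ => (1 + Real.exp (-t))⁻¹) x = (1 + Real.exp (-x))⁻¹ from rfl]
  field_simp [sigmoid]
  ring

lemma sigmoid_deriv_bound (x : ℝ) : ‖deriv sigmoid x‖ ≤ 1 / 4 := by
  rw [(sigmoid_hasDerivAt x).deriv]
  have h0 := sigmoid_pos x
  have h1 := sigmoid_lt_one x
  rw [Real.norm_eq_abs, abs_of_nonneg (by nlinarith)]
  nlinarith [sq_nonneg (sigmoid x - 1 / 2)]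

lemma sigmoid_lipschitz (x y : ℝ) : |sigmoid x - sigmoid y| ≤ |x - y| / 4 := by
  have h := Convex.norm_image_sub_le_of_norm_deriv_le
    (f := sigmoid) (s := Set.univ) (C := 1 / 4)
    (fun t _ => (sigmoid_hasDerivAt t).differentiableAt)
    (fun t _ => sigmoid_deriv_bound t) convex_univ (Set.mem_univ y) (Set.mem_univ x)
  rw [Real.norm_eq_abs, Real.norm_eq_abs] at h
  linarith [h]

lemma bernKL_comp_hasDerivAt (p : ℝ) (hp0 : 0 < p) (hp1 : p < 1) (t : ℝ) :
    HasDerivAt (fun s => bernKL p (sigmoid s)) (sigmoid t - p) t := by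
  have hs0 : ∀ s, 0 < sigmoid s := sigmoid_pos
  have hs1 : ∀ s, sigmoid s < 1 := sigmoid_lt_one
  have heq : (fun s => bernKL p (sigmoid s)) =
      fun s => p * (Real.log p - Real.log (sigmoid s)) +
        (1 - p) * (Real.log (1 - p) - Real.log (1 - sigmoid s)) := by
    funext s
    rw [bernKL, Real.log_div hp0.ne' (hs0 s).ne',
      Real.log_div (by linarith) (by linarith [hs1 s])]
  rw [heq]
  have d1 : HasDerivAt (fun s => Real.log (sigmoid s)) (1 - sigmoid t) t := by
    have h := (sigmoid_hasDerivAt t).log (hs0 t).ne'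
    convert h using 1
    rw [mul_comm, mul_div_assoc, div_self (hs0 t).ne', mul_one]
  have d2 : HasDerivAt (fun s => Real.log (1 - sigmoid s)) (-(sigmoid t)) t := by
    have hne : 1 - sigmoid t ≠ 0 := by linarith [hs1 t]
    have hd : HasDerivAt (fun s => 1 - sigmoid s) (-(sigmoid t * (1 - sigmoid t))) t :=
      (sigmoid_hasDerivAt t).const_sub 1
    have h := hd.log hne
    convert h using 1
    field_simp
  have h := ((((hasDerivAt_const t (Real.log p)).sub d1).const_mul p).add
    (((hasDerivAt_const t (Real.log (1 - p))).sub d2).const_mul (1 - p)))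
  refine h.congr_deriv ?_
  ring

lemma bernKL_sigmoid_le (a b : ℝ) :
    bernKL (sigmoid a) (sigmoid b) ≤ (a - b) ^ 2 / 8 := by
  set p := sigmoid a with hpdef
  have hp0 : 0 < p := sigmoid_pos a
  have hp1 : p < 1 := sigmoid_lt_one a
  set h : ℝ → ℝ := fun t => (t - a) ^ 2 / 8 - bernKL p (sigmoid t) with hh
  have hderiv : ∀ t, HasDerivAt h ((t - a) / 4 - (sigmoid t - p)) t := by
    intro t
    have d1 : HasDerivAt (fun t : ℝ => (t - a) ^ 2 / 8) ((t - a) / 4) t := by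
      have := (((hasDerivAt_id t).sub_const a).pow 2).div_const 8
      refine this.congr_deriv ?_
      simp only [id_eq]
      ring
    exact d1.sub (bernKL_comp_hasDerivAt p hp0 hp1 t)
  have hzero : h a = 0 := by
    have h1 : p / p = 1 := div_self hp0.ne'
    have h2 : (1 - p) / (1 - p) = 1 := div_self (by linarith)
    simp [hh, bernKL, ← hpdef, h1, h2]
  have key : 0 ≤ h b := by
    rcases le_total a b with hab | hab
    · have mono : MonotoneOn h (Set.Icc a b) := by
        apply monotoneOn_of_deriv_nonneg (convex_Icc a b)
        · exact fun t _ => (hderiv t).continuousAt.continuousWithinAt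
        · exact fun t _ => (hderiv t).differentiableAt.differentiableWithinAt
        · intro t ht
          rw [interior_Icc] at ht
          rw [(hderiv t).deriv]
          have hl := sigmoid_lipschitz t a
          have h1 : sigmoid t - p ≤ |sigmoid t - sigmoid a| := le_abs_self _
          rw [abs_of_nonneg (by linarith [ht.1] : (0:ℝ) ≤ t - a)] at hl
          rw [← hpdef] at h1
          linarith
      have := mono (Set.left_mem_Icc.2 hab) (Set.right_mem_Icc.2 hab) hab
      linarith [hzero ▸ this]
    · have anti : AntitoneOn h (Set.Icc b a) := by
        apply antitoneOn_of_deriv_nonpos (convex_Icc b a)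
        · exact fun t _ => (hderiv t).continuousAt.continuousWithinAt
        · exact fun t _ => (hderiv t).differentiableAt.differentiableWithinAt
        · intro t ht
          rw [interior_Icc] at ht
          rw [(hderiv t).deriv]
          have hl := sigmoid_lipschitz a t
          have h1 : sigmoid a - sigmoid t ≤ |sigmoid a - sigmoid t| := le_abs_self _
          rw [abs_of_nonneg (by linarith [ht.2] : (0:ℝ) ≤ a - t)] at hl
          rw [← hpdef] at h1
          linarith
      have := anti (Set.left_mem_Icc.2 hab) (Set.right_mem_Icc.2 hab) hab
      linarith [hzero ▸ this]
  have : bernKL p (sigmoid b) ≤ (b - a) ^ 2 / 8 := by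
    simp only [hh] at key; linarith
  calc bernKL p (sigmoid b) ≤ (b - a) ^ 2 / 8 := this
    _ = (a - b) ^ 2 / 8 := by ring

/-- under the upper block isometry bound at level `2k`, for symmetric `Θ_u, Θ_v`
with at most `k` nonzero rows each,
`KL(P_{Θ_u}, P_{Θ_v}) ≤ (1/8)‖Xᵀ(Θ_u-Θ_v)X‖²_{F,Ω} ≤ (N(1+Δ)/8)‖Θ_u-Θ_v‖²_F`. -/
theorem statement19 (d n k : ℕ) (X : Matrix (Fin d) (Fin n) ℝ) (Ω : Finset (Fin n × Fin n))
    (hΩ : ∀ p ∈ Ω, p.1 < p.2) (hk : 1 ≤ k) (hkd : k ≤ d)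
    (Δ : ℝ) (hΔ0 : 0 < Δ) (hΔ1 : Δ < 1)
    (hRIP : ∀ B : Matrix (Fin d) (Fin d) ℝ, B.IsSymm → norm00 B ≤ 2 * k →
      frobSqOmega X Ω B ≤ (Ω.card : ℝ) * (1 + Δ) * frobSq B)
    (Θu Θv : Matrix (Fin d) (Fin d) ℝ) (hu : Θu.IsSymm) (hv : Θv.IsSymm)
    (h0u : norm00 Θu ≤ k) (h0v : norm00 Θv ≤ k) :
    KLdiv X Ω Θu Θv ≤ 1 / 8 * frobSqOmega X Ω (Θu - Θv) ∧
      1 / 8 * frobSqOmega X Ω (Θu - Θv) ≤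
        (Ω.card : ℝ) * (1 + Δ) / 8 * frobSq (Θu - Θv) := by
  have haff : ∀ p, aff X (Θu - Θv) p = aff X Θu p - aff X Θv p := by
    intro p
    simp [aff, Matrix.mul_sub, Matrix.sub_mul, Matrix.sub_apply]
  constructor
  · rw [KLdiv, frobSqOmega, Finset.mul_sum]
    apply Finset.sum_le_sum
    intro p hp
    rw [haff p]
    calc bernKL (sigmoid (aff X Θu p)) (sigmoid (aff X Θv p))
        ≤ (aff X Θu p - aff X Θv p) ^ 2 / 8 := bernKL_sigmoid_le _ _
      _ = 1 / 8 * (aff X Θu p - aff X Θv p) ^ 2 := by ring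
  · have hsym : (Θu - Θv).IsSymm := hu.sub hv
    have h00 : norm00 (Θu - Θv) ≤ 2 * k := by
      classical
      have hsub : (Finset.univ.filter (fun i => (Θu - Θv) i ≠ 0)) ⊆
          (Finset.univ.filter (fun i => Θu i ≠ 0)) ∪
            (Finset.univ.filter (fun i => Θv i ≠ 0)) := by
        intro i hi
        simp only [Finset.mem_filter, Finset.mem_union, Finset.mem_univ, true_and] at hi ⊢
        by_contra hc
        push_neg at hc
        apply hi
        funext j
        have h1 : Θu i j = 0 := by rw [hc.1]; rfl
        have h2 : Θv i j = 0 := by rw [hc.2]; rfl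
        simp [Matrix.sub_apply, h1, h2]
      calc norm00 (Θu - Θv) ≤ _ := Finset.card_le_card hsub
        _ ≤ norm00 Θu + norm00 Θv := Finset.card_union_le _ _
        _ ≤ 2 * k := by omega
    have := hRIP (Θu - Θv) hsym h00
    linarith
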